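/- In the category of sets, for a polynomial functor in normal form F X = Σᵢ Aᵢ × (Bᵢ → X), the set C of partial functions f : List B ⇀ Σᵢ Aᵢ (where B = Σᵢ Bᵢ) satisfying (i) f is defined at the empty list, and (ii) f is defined at p ++ [inᵢ b] iff f p lies in the i-th summand, carries a final F-coalgebra structure. -/

import Mathlib

/-! A morphism `u : D → C` is forced letter by letter: the coalgebra equation at `z` fixes the
label `u z []` and says that, below the root, `u z` is undefined off the `(d z).1`-th summand
and agrees with `u ((d z).2.2 b)` along `⟨(d z).1, b⟩`. Reading this as a recursion on paths
defines the unfolding `u`, and induction on paths shows every morphism equals it. -/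

universe u

/-- The polynomial functor in normal form `F X = Σ i, A i × (B i → X)`. -/
def PolyF {n : ℕ} (A B : Fin n → Type u) (X : Type u) : Type u :=
  Σ i, A i × (B i → X)

/-- The set `C` of partial functions `f : List B ⇀ Σ i, A i` (with
`B = Σ i, B i`) such that (i) `f` is defined at the empty list and (ii) `f` is
defined at `p ++ [⟨i, b⟩]` iff `f p` lies in the `i`-th summand. -/
def TreeCarrier {n : ℕ} (A B : Fin n → Type u) : Type u :=
  {f : List (Σ i, B i) → Option (Σ i, A i) //
    (f []).isSome = true ∧
    ∀ (p : List (Σ i, B i)) (i : Fin n) (b : B i),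
      (f (p ++ [⟨i, b⟩])).isSome = true ↔ ∃ x : A i, f p = some ⟨i, x⟩}

/-- The coalgebra structure on `TreeCarrier A B`: if `f [] = ⟨i, x⟩` then `f`
is sent to `⟨i, (x, fun b => subtree of f along ⟨i, b⟩)⟩`. -/
def treeStr {n : ℕ} (A B : Fin n → Type u) (f : TreeCarrier A B) :
    PolyF A B (TreeCarrier A B) :=
  let r : Σ i, A i := (f.1 []).get f.2.1
  have hr : f.1 [] = some r := (Option.some_get f.2.1).symm
  ⟨r.1, (r.2, fun b =>
    ⟨fun p => f.1 (⟨r.1, b⟩ :: p), by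
      constructor
      · show (f.1 ([] ++ [⟨r.1, b⟩])).isSome = true
        exact (f.2.2 [] r.1 b).mpr ⟨r.2, by rw [hr]⟩
      · intro p j b'
        have := f.2.2 (⟨r.1, b⟩ :: p) j b'
        simpa [List.cons_append] using this⟩)⟩

namespace TreeCarrier

variable {n : ℕ} {A B : Fin n → Type u}

theorem apply_append_eq_none (f : TreeCarrier A B) {q : List (Σ i, B i)} (hq : f.1 q = none)
    (p : List (Σ i, B i)) : f.1 (q ++ p) = none := by
  induction p using List.reverseRecOn with
  | nil => simpa using hq
  | append_singleton p e ih =>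
    rw [← List.append_assoc, ← Option.not_isSome_iff_eq_none, f.2.2 (q ++ p) e.1 e.2, ih]
    simp

theorem apply_cons_eq_none (f : TreeCarrier A B) {j : Fin n} {x : A j}
    (hroot : f.1 [] = some ⟨j, x⟩) {i : Fin n} (hij : i ≠ j) (b : B i)
    (p : List (Σ i, B i)) : f.1 (⟨i, b⟩ :: p) = none := by
  have hb : f.1 [⟨i, b⟩] = none := by
    rw [← Option.not_isSome_iff_eq_none]
    rintro hb
    obtain ⟨_, hx⟩ := (f.2.2 [] i b).1 hb
    rw [hroot] at hx
    exact hij (Sigma.mk.inj_iff.1 (Option.some_inj.1 hx)).1.symm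
  exact apply_append_eq_none f hb p

theorem treeStr_eq_mk_iff (f : TreeCarrier A B) {i : Fin n} (a : A i)
    (g : B i → TreeCarrier A B) :
    treeStr A B f = ⟨i, (a, g)⟩ ↔
      f.1 [] = some ⟨i, a⟩ ∧ ∀ b p, f.1 (⟨i, b⟩ :: p) = (g b).1 p := by
  have hroot : f.1 [] = some ⟨(treeStr A B f).1, (treeStr A B f).2.1⟩ :=
    (Option.some_get f.2.1).symm
  have hchild : ∀ b p, f.1 (⟨(treeStr A B f).1, b⟩ :: p) = ((treeStr A B f).2.2 b).1 p :=
    fun _ _ => rfl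
  generalize treeStr A B f = s at hroot hchild ⊢
  obtain ⟨j, x, g'⟩ := s
  constructor
  · rintro ⟨⟩
    exact ⟨hroot, hchild⟩
  · rintro ⟨hroot', hchild'⟩
    obtain ⟨rfl, hx⟩ := Sigma.mk.inj_iff.1 (Option.some_inj.1 (hroot.symm.trans hroot'))
    obtain rfl := eq_of_heq hx
    obtain rfl : g' = g :=
      funext fun b => Subtype.ext <| funext fun p => (hchild b p).symm.trans (hchild' b p)
    rfl

variable {D : Type u} (d : D → PolyF A B D)

def unfoldFun : D → List (Σ i, B i) → Option (Σ i, A i)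
  | z, [] => some ⟨(d z).1, (d z).2.1⟩
  | z, ⟨i, b⟩ :: p => if h : i = (d z).1 then unfoldFun ((d z).2.2 (h ▸ b)) p else none

theorem unfoldFun_cons_self (z : D) (b : B (d z).1) (p : List (Σ i, B i)) :
    unfoldFun d z (⟨(d z).1, b⟩ :: p) = unfoldFun d ((d z).2.2 b) p := by
  simp [unfoldFun]

theorem unfoldFun_cons_of_ne {z : D} {i : Fin n} (h : i ≠ (d z).1) (b : B i)
    (p : List (Σ i, B i)) : unfoldFun d z (⟨i, b⟩ :: p) = none := by
  simp [unfoldFun, h]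

theorem isSome_unfoldFun_append_iff (z : D) (p : List (Σ i, B i)) (i : Fin n) (b : B i) :
    (unfoldFun d z (p ++ [⟨i, b⟩])).isSome = true ↔ ∃ x : A i, unfoldFun d z p = some ⟨i, x⟩ := by
  induction p generalizing z with
  | nil =>
    by_cases h : i = (d z).1
    · subst h
      simp [unfoldFun_cons_self, unfoldFun]
    · simp [unfoldFun_cons_of_ne d h, unfoldFun, Ne.symm h]
  | cons e p ih =>
    obtain ⟨j, c⟩ := e
    by_cases h : j = (d z).1
    · subst h
      simpa only [List.cons_append, unfoldFun_cons_self] using ih _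
    · simp [unfoldFun_cons_of_ne d h]

def unfold (z : D) : TreeCarrier A B :=
  ⟨unfoldFun d z, rfl, isSome_unfoldFun_append_iff d z⟩

theorem treeStr_unfold (z : D) :
    treeStr A B (unfold d z) = ⟨(d z).1, ((d z).2.1, fun b => unfold d ((d z).2.2 b))⟩ :=
  (treeStr_eq_mk_iff _ _ _).2 ⟨rfl, unfoldFun_cons_self d z⟩

theorem unique_of_treeStr_comp {v : D → TreeCarrier A B}
    (hv : ∀ z, treeStr A B (v z) = ⟨(d z).1, ((d z).2.1, fun b => v ((d z).2.2 b))⟩) :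
    v = unfold d := by
  funext z
  apply Subtype.ext
  funext p
  induction p generalizing z with
  | nil => exact ((treeStr_eq_mk_iff _ _ _).1 (hv z)).1
  | cons e p ih =>
    obtain ⟨hroot, hchild⟩ := (treeStr_eq_mk_iff _ _ _).1 (hv z)
    obtain ⟨i, b⟩ := e
    by_cases h : i = (d z).1
    · subst h
      exact (hchild b p).trans ((ih _).trans (unfoldFun_cons_self d z b p).symm)
    · exact (apply_cons_eq_none _ hroot h b p).trans (unfoldFun_cons_of_ne d h b p).symm

end TreeCarrier

/-- In the category of sets, `TreeCarrier A B` with the structure map `treeStr`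
is a final coalgebra for the polynomial functor `F X = Σ i, A i × (B i → X)`:
for every coalgebra `d : D → F D` there is a unique coalgebra morphism
`u : D → TreeCarrier A B`. -/
theorem stmt_13 {n : ℕ} (A B : Fin n → Type u) (D : Type u)
    (d : D → PolyF A B D) :
    ∃! u : D → TreeCarrier A B,
      ∀ z : D,
        treeStr A B (u z) =
          ⟨(d z).1, ((d z).2.1, fun b => u ((d z).2.2 b))⟩ :=
  ⟨TreeCarrier.unfold d, TreeCarrier.treeStr_unfold d, fun _ hv => TreeCarrier.unique_of_treeStr_comp d hv⟩
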